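/- Injectivity of the power-of-two literal mapping with alternating signs: the map sending, for i < n, the positive literal x_i to 4^i and the negative literal ¬x_i to −2·4^i assigns distinct sums to distinct sets of literals, i.e., for any two distinct functions f, g : Fin n → Option Bool (where none = literal absent, some true = positive, some false = negative), the total mapped sums differ. -/

import Mathlib

/-!
Read the sum in base 4: position `0` contributes `0`, `1` or `-2`, which are pairwise
incongruent modulo 4, while every other position contributes a multiple of 4. So equal
sums force agreement at position `0`, and after cancelling it and dividing by 4 the
remaining positions agree by induction on `n`.
-/

/-- Value of a (possibly absent) literal at position `i`: a positive literal
maps to `4^i` and a negative literal to `-2 * 4^i`. -/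
def literalVal (i : ℕ) : Option Bool → ℤ
  | none => 0
  | some true => 4 ^ i
  | some false => -2 * 4 ^ i

lemma literalVal_succ (i : ℕ) (a : Option Bool) :
    literalVal (i + 1) a = 4 * literalVal i a := by
  rcases a with _ | _ | _ <;> simp only [literalVal, pow_succ] <;> ring

lemma sum_literalVal_fin_succ {n : ℕ} (f : Fin (n + 1) → Option Bool) :
    ∑ i : Fin (n + 1), literalVal i (f i) =
      literalVal 0 (f 0) + 4 * ∑ i : Fin n, literalVal i (f i.succ) := by
  simp [Fin.sum_univ_succ, Finset.mul_sum, literalVal_succ]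

lemma eq_and_eq_of_literalVal_zero_add_four_mul {a b : Option Bool} {x y : ℤ}
    (h : literalVal 0 a + 4 * x = literalVal 0 b + 4 * y) : a = b ∧ x = y := by
  rcases a with _ | _ | _ <;> rcases b with _ | _ | _ <;>
    simp only [literalVal, pow_zero] at h <;> simp <;> omega

theorem injective_sum_literalVal :
    ∀ n : ℕ, Function.Injective fun f : Fin n → Option Bool => ∑ i : Fin n, literalVal i (f i)
  | 0 => fun f g _ => Subsingleton.elim f g
  | n + 1 => fun f g h => by
    simp only [sum_literalVal_fin_succ] at h
    obtain ⟨h0, hsucc⟩ := eq_and_eq_of_literalVal_zero_add_four_mul h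
    have htail := injective_sum_literalVal n hsucc
    exact funext fun i => Fin.cases h0 (congrFun htail) i

/-- The alternating-sign power-of-two literal mapping assigns distinct total
sums to distinct sets of literals. -/
theorem literal_mapping_injective (n : ℕ) (f g : Fin n → Option Bool)
    (hfg : f ≠ g) :
    (∑ i : Fin n, literalVal i (f i)) ≠ (∑ i : Fin n, literalVal i (g i)) :=
  (injective_sum_literalVal n).ne hfg
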